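/- arXiv:2510.18159 — 2 statements merged into one kernel-verified Lean document; each statement's English description precedes it below -/
import Mathlib

section
/- For every τ > 0 and every real x, ∫_{-∞}^0 (1 - e^ξ) · (1/(2√(πτ))) · exp(-(x - ξ)²/(4τ)) dξ = Φ(-x/√(2τ)) - e^{τ + x} · Φ(-(x + 2τ)/√(2τ)), where Φ is the standard normal cumulative distribution function. -/
open Real MeasureTheory Set

/-- The standard normal cumulative distribution function
`Φ z = (1/√(2π)) ∫_{-∞}^z e^{-t²/2} dt`. -/
noncomputable def stdNormalCDF (z : ℝ) : ℝ :=
  (1 / Real.sqrt (2 * π)) * ∫ t in Iic z, Real.exp (-t ^ 2 / 2)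

lemma gauss_shift_integrable (τ : ℝ) (hτ : 0 < τ) (m : ℝ) :
    Integrable (fun ξ : ℝ => Real.exp (-(ξ - m) ^ 2 / (4 * τ))) := by
  have h : (fun ξ : ℝ => Real.exp (-(ξ - m) ^ 2 / (4 * τ)))
      = fun ξ : ℝ => Real.exp (-(1 / (4 * τ)) * (ξ - m) ^ 2) := by
    funext ξ; congr 1; field_simp
  rw [h]
  exact (integrable_exp_neg_mul_sq (by positivity)).comp_sub_right m

lemma gauss_Iic_integral (τ : ℝ) (hτ : 0 < τ) (m : ℝ) :
    ∫ ξ in Iic (0:ℝ), Real.exp (-(ξ - m) ^ 2 / (4 * τ))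
      = Real.sqrt (2 * τ) * ∫ t in Iic (-m / Real.sqrt (2 * τ)), Real.exp (-t ^ 2 / 2) := by
  set s := Real.sqrt (2 * τ) with hs_def
  have hs : 0 < s := Real.sqrt_pos.mpr (by linarith)
  have hs2 : s ^ 2 = 2 * τ := Real.sq_sqrt (by linarith)
  set g : ℝ → ℝ := (Iic (0:ℝ)).indicator (fun ξ => Real.exp (-(ξ - m) ^ 2 / (4 * τ))) with hg
  have h1 : ∫ ξ in Iic (0:ℝ), Real.exp (-(ξ - m) ^ 2 / (4 * τ)) = ∫ ξ, g ξ :=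
    (integral_indicator measurableSet_Iic).symm
  have h2 : (∫ t : ℝ, g (s * t + m)) = |s⁻¹| • ∫ u : ℝ, g (u + m) :=
    Measure.integral_comp_mul_left (fun u => g (u + m)) s
  have h3 : (∫ u : ℝ, g (u + m)) = ∫ ξ, g ξ := integral_add_right_eq_self g m
  have h4 : (fun t : ℝ => g (s * t + m))
      = (Iic (-m / s)).indicator (fun t => Real.exp (-t ^ 2 / 2)) := by
    funext t
    have hmem : s * t + m ≤ 0 ↔ t ≤ -m / s := by
      rw [le_div_iff₀ hs]; constructor <;> intro h <;> nlinarith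
    simp only [hg, indicator, mem_Iic]
    by_cases ht : t ≤ -m / s
    · rw [if_pos ht, if_pos (hmem.mpr ht)]
      congr 1
      have hsq : (s * t + m - m) ^ 2 = (2 * τ) * t ^ 2 := by rw [← hs2]; ring
      rw [hsq]
      field_simp
      ring
    · rw [if_neg ht, if_neg (fun h => ht (hmem.mp h))]
  have h5 : (∫ t : ℝ, (Iic (-m / s)).indicator (fun t => Real.exp (-t ^ 2 / 2)) t)
      = ∫ t in Iic (-m / s), Real.exp (-t ^ 2 / 2) :=
    integral_indicator measurableSet_Iic
  have h2' : (∫ u : ℝ, g (u + m)) = s * ∫ t : ℝ, g (s * t + m) := by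
    rw [h2, abs_of_pos (inv_pos.mpr hs), smul_eq_mul, ← mul_assoc,
      mul_inv_cancel₀ hs.ne', one_mul]
  rw [h1, ← h3, h2', h4, h5]

lemma sqrt_prefactor (τ : ℝ) (hτ : 0 < τ) :
    1 / (2 * Real.sqrt (π * τ)) * Real.sqrt (2 * τ) = 1 / Real.sqrt (2 * π) := by
  have hπ := Real.pi_pos
  have h1 : 2 * Real.sqrt (π * τ) = Real.sqrt (2 * π) * Real.sqrt (2 * τ) := by
    rw [← Real.sqrt_mul (by positivity), show (2:ℝ) * π * (2 * τ) = 2 ^ 2 * (π * τ) by ring,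
      Real.sqrt_mul (by norm_num : (0:ℝ) ≤ 2 ^ 2) (π * τ),
      Real.sqrt_sq (by norm_num : (0:ℝ) ≤ 2)]
  have h2 : Real.sqrt (2 * τ) ≠ 0 := by positivity
  have h3 : Real.sqrt (2 * π) ≠ 0 := by positivity
  rw [h1]
  field_simp

theorem heat_kernel_put_payoff_integral (τ : ℝ) (hτ : 0 < τ) (x : ℝ) :
    ∫ ξ in Iic (0:ℝ),
        (1 - Real.exp ξ) * ((1 / (2 * Real.sqrt (π * τ))) * Real.exp (-(x - ξ) ^ 2 / (4 * τ))) =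
      stdNormalCDF (-x / Real.sqrt (2 * τ)) -
        Real.exp (τ + x) * stdNormalCDF (-(x + 2 * τ) / Real.sqrt (2 * τ)) := by
  have hπ := Real.pi_pos
  set c : ℝ := 1 / (2 * Real.sqrt (π * τ)) with hc
  have hkey : ∀ ξ : ℝ,
      (1 - Real.exp ξ) * (c * Real.exp (-(x - ξ) ^ 2 / (4 * τ)))
        = c * Real.exp (-(ξ - x) ^ 2 / (4 * τ))
          - Real.exp (τ + x) * (c * Real.exp (-(ξ - (x + 2 * τ)) ^ 2 / (4 * τ))) := by
    intro ξ
    have h1 : (-(x - ξ) ^ 2 / (4 * τ)) = (-(ξ - x) ^ 2 / (4 * τ)) := by ring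
    have h2 : Real.exp ξ * Real.exp (-(x - ξ) ^ 2 / (4 * τ))
        = Real.exp (τ + x) * Real.exp (-(ξ - (x + 2 * τ)) ^ 2 / (4 * τ)) := by
      rw [← Real.exp_add, ← Real.exp_add]
      congr 1
      field_simp
      ring
    rw [h1]
    calc (1 - Real.exp ξ) * (c * Real.exp (-(ξ - x) ^ 2 / (4 * τ)))
        = c * Real.exp (-(ξ - x) ^ 2 / (4 * τ))
          - c * (Real.exp ξ * Real.exp (-(x - ξ) ^ 2 / (4 * τ))) := by rw [h1]; ring
      _ = _ := by rw [h2]; ring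
  simp_rw [hkey]
  have hi1 : IntegrableOn (fun ξ : ℝ => c * Real.exp (-(ξ - x) ^ 2 / (4 * τ))) (Iic 0) :=
    (((gauss_shift_integrable τ hτ x).const_mul c)).integrableOn
  have hi2 : IntegrableOn
      (fun ξ : ℝ => Real.exp (τ + x) * (c * Real.exp (-(ξ - (x + 2 * τ)) ^ 2 / (4 * τ))))
      (Iic 0) :=
    ((((gauss_shift_integrable τ hτ (x + 2 * τ)).const_mul c).const_mul
      (Real.exp (τ + x)))).integrableOn
  rw [integral_sub hi1 hi2, integral_const_mul, integral_const_mul, integral_const_mul,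
    gauss_Iic_integral τ hτ x, gauss_Iic_integral τ hτ (x + 2 * τ)]
  have hpref := sqrt_prefactor τ hτ
  unfold stdNormalCDF
  rw [← mul_assoc, ← mul_assoc, hc, hpref,
    mul_assoc (Real.exp (τ + x)), ← mul_assoc (1 / (2 * Real.sqrt (π * τ))), hpref]
end

section
/- Let D = {(τ, s) : 0 ≤ s ≤ τ ≤ T}, let K : D → ℝ be continuous, let f : [0, T] → ℝ be continuous, and let α ∈ (0, 1). Then the Volterra integral equation u(τ) = f(τ) + ∫₀^τ (τ - s)^{α - 1} K(τ, s) u(s) ds possesses a unique continuous solution u : [0, T] → ℝ. -/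
/-!
Bielecki's weighted-norm argument. Let `V u (τ) = ∫₀^τ (τ - s)^(α-1) K(τ, s) u(s) ds` and
`|K| ≤ M` on the triangle. Since `∫₀^τ (τ - s)^(α-1) e^(ρ s) ds ≤ Γ(α) ρ^(-α) e^(ρ τ)`, the Picard
map `u ↦ f + V u` is Lipschitz with constant `M Γ(α) / ρ^α` for the norm `sup_τ e^(-ρ τ) |u τ|`,
a contraction once `ρ` is large, and Banach's fixed point theorem gives existence and uniqueness.
That `V u` is continuous follows from the substitution `s = τ r`, which turns `V u (τ)` into
`τ^α ∫₀¹ (1 - r)^(α-1) K(τ, τ r) u(τ r) dr`: the singularity sits at a fixed endpoint and dominated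
convergence applies.
-/

open Real MeasureTheory Set Function intervalIntegral

namespace Volterra

def triangle (T : ℝ) : Set (ℝ × ℝ) := {p | 0 ≤ p.2 ∧ p.2 ≤ p.1 ∧ p.1 ≤ T}

noncomputable def volterraOp (α : ℝ) (K : ℝ → ℝ → ℝ) (u : ℝ → ℝ) (τ : ℝ) : ℝ :=
  ∫ s in (0:ℝ)..τ, (τ - s) ^ (α - 1) * K τ s * u s

theorem isCompact_triangle (T : ℝ) : IsCompact (triangle T) := by
  refine (isCompact_Icc.prod (isCompact_Icc (a := 0) (b := T))).of_isClosed_subset ?_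
    fun p ⟨h0, hs, hT⟩ => ⟨⟨h0.trans hs, hT⟩, h0, hs.trans hT⟩
  exact (isClosed_le continuous_const continuous_snd).inter
    ((isClosed_le continuous_snd continuous_fst).inter
      (isClosed_le continuous_fst continuous_const))

theorem intervalIntegrable_rpow_sub_mul {α : ℝ} (hα : 0 < α) (τ : ℝ) {a b : ℝ} {g : ℝ → ℝ}
    (hg : ContinuousOn g (uIcc a b)) :
    IntervalIntegrable (fun s => (τ - s) ^ (α - 1) * g s) volume a b := by
  have h := (intervalIntegrable_rpow' (r := α - 1) (by linarith) (a := τ - b) (b := τ - a))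
  simpa using ((h.comp_sub_left τ).symm.mul_continuousOn (by simpa using hg))

theorem integral_rpow_sub_mul_eq_rpow_mul {α τ : ℝ} (hα : α ≠ 0) (hτ : 0 ≤ τ) (g : ℝ → ℝ) :
    ∫ s in (0:ℝ)..τ, (τ - s) ^ (α - 1) * g s =
      τ ^ α * ∫ r in (0:ℝ)..1, (1 - r) ^ (α - 1) * g (τ * r) := by
  rcases hτ.eq_or_lt with rfl | hτ
  · simp [zero_rpow hα]
  have hscale := integral_comp_mul_left (a := 0) (b := 1)
    (fun s => (τ - s) ^ (α - 1) * g s) hτ.ne'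
  have hpull : ∫ r in (0:ℝ)..1, (τ - τ * r) ^ (α - 1) * g (τ * r) =
      τ ^ (α - 1) * ∫ r in (0:ℝ)..1, (1 - r) ^ (α - 1) * g (τ * r) := by
    rw [← intervalIntegral.integral_const_mul]
    refine integral_congr fun r hr => ?_
    rw [uIcc_of_le zero_le_one] at hr
    rw [← mul_one_sub, mul_rpow hτ.le (by linarith [hr.2]), mul_assoc]
  simp only [mul_zero, mul_one, smul_eq_mul] at hscale
  rw [hpull, eq_inv_mul_iff_mul_eq₀ hτ.ne'] at hscale
  rw [← hscale, ← mul_assoc, ← rpow_one_add' hτ.le (by simpa using hα), add_sub_cancel]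

theorem mapsTo_triangle {T r : ℝ} (hr : r ∈ Icc (0:ℝ) 1) :
    MapsTo (fun τ => (τ, τ * r)) (Icc 0 T) (triangle T) :=
  fun _ hτ => ⟨mul_nonneg hτ.1 hr.1, mul_le_of_le_one_right hτ.1 hr.2, hτ.2⟩

theorem continuousOn_integral_one_sub_rpow_mul {α T : ℝ} (hα : 0 < α) {h : ℝ → ℝ → ℝ}
    (hh : ContinuousOn (uncurry h) (triangle T)) :
    ContinuousOn (fun τ => ∫ r in (0:ℝ)..1, (1 - r) ^ (α - 1) * h τ (τ * r)) (Icc 0 T) := by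
  obtain ⟨M, hM⟩ := (isCompact_triangle T).exists_bound_of_continuousOn hh
  have hslice : ∀ r ∈ Icc (0:ℝ) 1, ContinuousOn (fun τ => h τ (τ * r)) (Icc 0 T) := fun r hr =>
    hh.comp (continuousOn_id.prodMk (continuousOn_id.mul continuousOn_const)) (mapsTo_triangle hr)
  intro τ₀ hτ₀
  refine continuousWithinAt_of_dominated_interval (bound := fun r => (1 - r) ^ (α - 1) * M)
    ?_ ?_ (intervalIntegrable_rpow_sub_mul hα 1 continuousOn_const) ?_
  · filter_upwards [self_mem_nhdsWithin] with τ hτ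
    refine (intervalIntegrable_rpow_sub_mul hα 1 ?_).def'.aestronglyMeasurable
    rw [uIcc_of_le zero_le_one]
    exact hh.comp (continuousOn_const.prodMk (continuousOn_const.mul continuousOn_id))
      fun r hr => mapsTo_triangle hr hτ
  · filter_upwards [self_mem_nhdsWithin] with τ hτ
    refine ae_of_all _ fun r hr => ?_
    rw [uIoc_of_le zero_le_one] at hr
    rw [norm_mul, norm_of_nonneg (rpow_nonneg (by linarith [hr.2]) _)]
    exact mul_le_mul_of_nonneg_left (hM _ (mapsTo_triangle (Ioc_subset_Icc_self hr) hτ))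
      (rpow_nonneg (by linarith [hr.2]) _)
  · refine ae_of_all _ fun r hr => ?_
    rw [uIoc_of_le zero_le_one] at hr
    exact continuousWithinAt_const.mul (hslice r (Ioc_subset_Icc_self hr) τ₀ hτ₀)

theorem continuousOn_integral_rpow_sub_mul {α T : ℝ} (hα : 0 < α) {h : ℝ → ℝ → ℝ}
    (hh : ContinuousOn (uncurry h) (triangle T)) :
    ContinuousOn (fun τ => ∫ s in (0:ℝ)..τ, (τ - s) ^ (α - 1) * h τ s) (Icc 0 T) := by
  refine (((continuous_rpow_const hα.le).continuousOn).mul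
    (continuousOn_integral_one_sub_rpow_mul hα hh)).congr fun τ hτ => ?_
  exact integral_rpow_sub_mul_eq_rpow_mul hα.ne' hτ.1 _

theorem integral_rpow_mul_exp_neg_le {α ρ τ : ℝ} (hα : 0 < α) (hρ : 0 < ρ) (hτ : 0 ≤ τ) :
    ∫ t in (0:ℝ)..τ, t ^ (α - 1) * exp (-(ρ * t)) ≤ Gamma α / ρ ^ α := by
  have hGamma := integral_rpow_mul_exp_neg_mul_Ioi hα hρ
  have hnonneg : ∀ t ∈ Ioi (0:ℝ), 0 ≤ t ^ (α - 1) * exp (-(ρ * t)) := fun t ht =>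
    mul_nonneg (rpow_nonneg ht.le _) (exp_pos _).le
  rw [integral_of_le hτ, div_eq_inv_mul, ← inv_rpow hρ.le, ← one_div, ← hGamma]
  refine setIntegral_mono_set ?_ ?_ (Ioc_subset_Ioi_self.eventuallyLE)
  · exact Integrable.of_integral_ne_zero (hGamma ▸ (by positivity))
  · exact (ae_restrict_iff' measurableSet_Ioi).2 (ae_of_all _ hnonneg)

theorem integral_rpow_sub_mul_exp_le {α ρ τ : ℝ} (hα : 0 < α) (hρ : 0 < ρ) (hτ : 0 ≤ τ) :
    ∫ s in (0:ℝ)..τ, (τ - s) ^ (α - 1) * exp (ρ * s) ≤ Gamma α / ρ ^ α * exp (ρ * τ) := by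
  have hsubst : ∫ s in (0:ℝ)..τ, (τ - s) ^ (α - 1) * exp (ρ * s) =
      exp (ρ * τ) * ∫ t in (0:ℝ)..τ, t ^ (α - 1) * exp (-(ρ * t)) := by
    have hflip := integral_comp_sub_left (fun t => t ^ (α - 1) * exp (ρ * (τ - t))) τ
      (a := 0) (b := τ)
    simp only [sub_self, sub_zero, sub_sub_cancel] at hflip
    rw [hflip, ← intervalIntegral.integral_const_mul]
    refine integral_congr fun t _ => ?_
    rw [mul_sub, exp_sub, exp_neg]
    ring
  rw [hsubst, mul_comm _ (exp _)]
  exact mul_le_mul_of_nonneg_left (integral_rpow_mul_exp_neg_le hα hρ hτ) (exp_pos _).le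

theorem volterraOp_congr {α τ : ℝ} {K : ℝ → ℝ → ℝ} {u v : ℝ → ℝ} (hτ : 0 ≤ τ)
    (huv : EqOn u v (Icc 0 τ)) : volterraOp α K u τ = volterraOp α K v τ :=
  integral_congr fun s hs => by
    simp only [huv (uIcc_of_le hτ ▸ hs)]

theorem volterraOp_sub {α τ : ℝ} (hα : 0 < α) (hτ : 0 ≤ τ) {K : ℝ → ℝ → ℝ} {u v : ℝ → ℝ}
    (hK : ContinuousOn (K τ) (Icc 0 τ)) (hu : ContinuousOn u (Icc 0 τ))
    (hv : ContinuousOn v (Icc 0 τ)) :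
    volterraOp α K u τ - volterraOp α K v τ = volterraOp α K (u - v) τ := by
  rw [← uIcc_of_le hτ] at hK hu hv
  simp only [volterraOp, mul_assoc]
  rw [← integral_sub (intervalIntegrable_rpow_sub_mul hα τ (g := fun s => K τ s * u s) (hK.mul hu))
    (intervalIntegrable_rpow_sub_mul hα τ (g := fun s => K τ s * v s) (hK.mul hv))]
  simp only [Pi.sub_apply, mul_sub]

theorem abs_volterraOp_le {α ρ τ M c : ℝ} (hα : 0 < α) (hρ : 0 < ρ) (hτ : 0 ≤ τ)
    {K : ℝ → ℝ → ℝ} {u : ℝ → ℝ} (hK : ∀ s ∈ Icc 0 τ, |K τ s| ≤ M)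
    (hu : ∀ s ∈ Icc 0 τ, |u s| ≤ c * exp (ρ * s)) :
    |volterraOp α K u τ| ≤ M * Gamma α / ρ ^ α * (c * exp (ρ * τ)) := by
  have hM : 0 ≤ M := (abs_nonneg _).trans (hK 0 ⟨le_rfl, hτ⟩)
  have hc : 0 ≤ c := by simpa using (abs_nonneg _).trans (hu 0 ⟨le_rfl, hτ⟩)
  have hpointwise : ∀ᵐ s, s ∈ Ioc 0 τ →
      ‖(τ - s) ^ (α - 1) * K τ s * u s‖ ≤ (τ - s) ^ (α - 1) * (M * c * exp (ρ * s)) := by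
    refine ae_of_all _ fun s hs => ?_
    have hker : 0 ≤ (τ - s) ^ (α - 1) := rpow_nonneg (by linarith [hs.2]) _
    rw [norm_mul, norm_mul, norm_of_nonneg hker, mul_assoc, mul_assoc]
    refine mul_le_mul_of_nonneg_left ?_ hker
    exact mul_le_mul (hK s (Ioc_subset_Icc_self hs)) (hu s (Ioc_subset_Icc_self hs))
      (norm_nonneg _) hM
  calc |volterraOp α K u τ|
      ≤ ∫ s in (0:ℝ)..τ, (τ - s) ^ (α - 1) * (M * c * exp (ρ * s)) :=
        norm_integral_le_of_norm_le hτ hpointwise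
          (intervalIntegrable_rpow_sub_mul hα τ (by fun_prop))
    _ = M * c * ∫ s in (0:ℝ)..τ, (τ - s) ^ (α - 1) * exp (ρ * s) := by
        rw [← intervalIntegral.integral_const_mul]
        exact integral_congr fun s _ => by ring
    _ ≤ M * c * (Gamma α / ρ ^ α * exp (ρ * τ)) :=
        mul_le_mul_of_nonneg_left (integral_rpow_sub_mul_exp_le hα hρ hτ) (mul_nonneg hM hc)
    _ = M * Gamma α / ρ ^ α * (c * exp (ρ * τ)) := by ring

theorem continuousOn_volterraOp {α T : ℝ} (hα : 0 < α) {K : ℝ → ℝ → ℝ} {u : ℝ → ℝ}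
    (hK : ContinuousOn (uncurry K) (triangle T)) (hu : ContinuousOn u (Icc 0 T)) :
    ContinuousOn (volterraOp α K u) (Icc 0 T) := by
  have hKu : ContinuousOn (uncurry fun τ s => K τ s * u s) (triangle T) :=
    hK.mul (hu.comp continuousOn_snd fun p hp => ⟨hp.1, hp.2.1.trans hp.2.2⟩)
  refine (continuousOn_integral_rpow_sub_mul hα hKu).congr fun τ _ => ?_
  simp only [volterraOp, mul_assoc]

theorem existsUnique_isFixedPt_of_contractingWith_conj {X Y : Type*} [MetricSpace Y]
    [CompleteSpace Y] [Nonempty Y] {q : NNReal} (e : X ≃ Y) {Φ : X → X}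
    (hΦ : ContractingWith q (e.conj Φ)) : ∃! x, IsFixedPt Φ x := by
  have hfix : ∀ y, IsFixedPt (e.conj Φ) y ↔ IsFixedPt Φ (e.symm y) := fun y => by
    simp only [IsFixedPt, Equiv.conj_apply, ← Equiv.eq_symm_apply]
  refine ⟨e.symm (hΦ.fixedPoint _), (hfix _).1 hΦ.fixedPoint_isFixedPt, fun x hx => ?_⟩
  rw [← hΦ.fixedPoint_unique ((hfix (e x)).2 (by rwa [e.symm_apply_apply])), e.symm_apply_apply]

section Picard

variable {T α : ℝ} (hT : 0 ≤ T) (hα : 0 < α) {K : ℝ → ℝ → ℝ}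
  (hK : ContinuousOn (uncurry K) (triangle T)) {f : ℝ → ℝ} (hf : ContinuousOn f (Icc 0 T))

noncomputable def picard (u : C(Icc 0 T, ℝ)) : C(Icc 0 T, ℝ) :=
  ⟨(Icc 0 T).domRestrict (f + volterraOp α K (IccExtend hT u)),
    (hf.add (continuousOn_volterraOp hα hK
      (map_continuous u).Icc_extend'.continuousOn)).domRestrict⟩

theorem picard_apply (u : C(Icc 0 T, ℝ)) (τ : Icc 0 T) :
    picard hT hα hK hf u τ = f τ + volterraOp α K (IccExtend hT u) τ :=
  rfl

theorem isFixedPt_picard_iff {u : ℝ → ℝ} (hu : ContinuousOn u (Icc 0 T)) :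
    IsFixedPt (picard hT hα hK hf) ⟨(Icc 0 T).domRestrict u, hu.domRestrict⟩ ↔
      ∀ τ ∈ Icc 0 T, u τ = f τ + volterraOp α K u τ := by
  simp only [IsFixedPt, ContinuousMap.ext_iff, Subtype.forall, picard_apply]
  refine forall₂_congr fun τ hτ => ?_
  rw [eq_comm, volterraOp_congr hτ.1 fun s hs => IccExtend_of_mem hT _ ⟨hs.1, hs.2.trans hτ.2⟩]
  rfl

variable (T) in
/-- Conjugating by `u ↦ e^(-ρ τ) u` turns the sup norm of `C([0, T], ℝ)` into Bielecki's norm. -/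
noncomputable def expWeight (ρ : ℝ) : C(Icc 0 T, ℝ) ≃ C(Icc 0 T, ℝ) where
  toFun u := ⟨fun τ => exp (-(ρ * τ)) * u τ, by fun_prop⟩
  invFun w := ⟨fun τ => exp (ρ * τ) * w τ, by fun_prop⟩
  left_inv u := by ext τ; simp [← mul_assoc, ← exp_add]
  right_inv w := by ext τ; simp [← mul_assoc, ← exp_add]

theorem dist_conj_picard_le {M ρ : ℝ} (hρ : 0 < ρ) (hM : ∀ p ∈ triangle T, ‖uncurry K p‖ ≤ M)
    (w₁ w₂ : C(Icc 0 T, ℝ)) :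
    dist ((expWeight T ρ).conj (picard hT hα hK hf) w₁)
        ((expWeight T ρ).conj (picard hT hα hK hf) w₂) ≤ M * Gamma α / ρ ^ α * dist w₁ w₂ := by
  have hM0 : 0 ≤ M := (norm_nonneg _).trans (hM (0, 0) ⟨le_rfl, le_rfl, hT⟩)
  set u₁ := IccExtend hT ((expWeight T ρ).symm w₁)
  set u₂ := IccExtend hT ((expWeight T ρ).symm w₂)
  rw [ContinuousMap.dist_le (by positivity)]
  rintro ⟨τ, hτ⟩
  have hslice : ContinuousOn (K τ) (Icc 0 τ) :=
    hK.comp (continuousOn_const.prodMk continuousOn_id) fun s hs => ⟨hs.1, hs.2, hτ.2⟩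
  have hdiff : ∀ s ∈ Icc 0 τ, |(u₁ - u₂) s| ≤ dist w₁ w₂ * exp (ρ * s) := by
    intro s hs
    have hsT : s ∈ Icc 0 T := ⟨hs.1, hs.2.trans hτ.2⟩
    simp only [Pi.sub_apply, u₁, u₂, IccExtend_of_mem hT _ hsT]
    change |exp (ρ * s) * w₁ ⟨s, hsT⟩ - exp (ρ * s) * w₂ ⟨s, hsT⟩| ≤ _
    rw [← mul_sub, abs_mul, abs_of_pos (exp_pos _), mul_comm, ← Real.dist_eq]
    exact mul_le_mul_of_nonneg_right (ContinuousMap.dist_apply_le_dist _) (exp_pos _).le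
  have hbound := abs_volterraOp_le hα hρ hτ.1
    (fun s hs => (Real.norm_eq_abs _).symm.trans_le (hM (τ, s) ⟨hs.1, hs.2, hτ.2⟩)) hdiff
  calc dist ((expWeight T ρ).conj (picard hT hα hK hf) w₁ ⟨τ, hτ⟩)
        ((expWeight T ρ).conj (picard hT hα hK hf) w₂ ⟨τ, hτ⟩)
      = exp (-(ρ * τ)) * |volterraOp α K (u₁ - u₂) τ| := by
        change dist (exp (-(ρ * τ)) * (f τ + volterraOp α K u₁ τ))
          (exp (-(ρ * τ)) * (f τ + volterraOp α K u₂ τ)) = _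
        rw [Real.dist_eq, ← mul_sub, add_sub_add_left_eq_sub, abs_mul, abs_of_pos (exp_pos _),
          volterraOp_sub hα hτ.1 hslice (map_continuous _).Icc_extend'.continuousOn
            (map_continuous _).Icc_extend'.continuousOn]
    _ ≤ exp (-(ρ * τ)) * (M * Gamma α / ρ ^ α * (dist w₁ w₂ * exp (ρ * τ))) :=
        mul_le_mul_of_nonneg_left hbound (exp_pos _).le
    _ = M * Gamma α / ρ ^ α * dist w₁ w₂ := by
        rw [exp_neg]
        field_simp

theorem exists_contractingWith_conj_picard :
    ∃ ρ, ContractingWith (1 / 2) ((expWeight T ρ).conj (picard hT hα hK hf)) := by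
  obtain ⟨M, hM⟩ := (isCompact_triangle T).exists_bound_of_continuousOn hK
  have hM0 : 0 ≤ M := (norm_nonneg _).trans (hM (0, 0) ⟨le_rfl, le_rfl, hT⟩)
  -- `ρ^α = 2 M Γ(α) + 1` makes the Lipschitz constant `M Γ(α) / ρ^α` at most `1/2`.
  have hρα : ((2 * M * Gamma α + 1) ^ α⁻¹) ^ α = 2 * M * Gamma α + 1 :=
    rpow_inv_rpow (by positivity) hα.ne'
  refine ⟨(2 * M * Gamma α + 1) ^ α⁻¹, by norm_num, LipschitzWith.of_dist_le_mul fun w₁ w₂ => ?_⟩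
  refine (dist_conj_picard_le hT hα hK hf (by positivity) hM w₁ w₂).trans
    (mul_le_mul_of_nonneg_right ?_ dist_nonneg)
  rw [hρα, div_le_iff₀ (by positivity)]
  norm_num
  linarith

end Picard

end Volterra

open Volterra

theorem volterra_weakly_singular_existence_uniqueness (T : ℝ) (hT : 0 ≤ T)
    (K : ℝ → ℝ → ℝ)
    (hK : ContinuousOn (fun p : ℝ × ℝ => K p.1 p.2)
      {p : ℝ × ℝ | 0 ≤ p.2 ∧ p.2 ≤ p.1 ∧ p.1 ≤ T})
    (f : ℝ → ℝ) (hf : ContinuousOn f (Icc 0 T))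
    (α : ℝ) (hα : α ∈ Ioo (0:ℝ) 1) :
    ∃ u : ℝ → ℝ,
      (ContinuousOn u (Icc 0 T) ∧
        ∀ τ ∈ Icc (0:ℝ) T,
          u τ = f τ + ∫ s in (0:ℝ)..τ, (τ - s) ^ (α - 1) * K τ s * u s) ∧
      ∀ v : ℝ → ℝ,
        (ContinuousOn v (Icc 0 T) ∧
          ∀ τ ∈ Icc (0:ℝ) T,
            v τ = f τ + ∫ s in (0:ℝ)..τ, (τ - s) ^ (α - 1) * K τ s * v s) →
        EqOn u v (Icc 0 T) := by
  obtain ⟨ρ, hρ⟩ := exists_contractingWith_conj_picard hT hα.1 hK hf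
  obtain ⟨u₀, hu₀, huniq⟩ := existsUnique_isFixedPt_of_contractingWith_conj _ hρ
  have hu : ContinuousOn (IccExtend hT u₀) (Icc 0 T) :=
    (map_continuous u₀).Icc_extend'.continuousOn
  have hrestrict :
      (⟨(Icc 0 T).domRestrict (IccExtend hT u₀), hu.domRestrict⟩ : C(Icc 0 T, ℝ)) = u₀ :=
    ContinuousMap.ext (IccExtend_val hT u₀)
  refine ⟨IccExtend hT u₀, ⟨hu, (isFixedPt_picard_iff hT hα.1 hK hf hu).1 (by rwa [hrestrict])⟩, ?_⟩
  rintro v ⟨hv, hsol⟩ τ hτ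
  rw [IccExtend_of_mem hT _ hτ, ← huniq _ ((isFixedPt_picard_iff hT hα.1 hK hf hv).2 hsol)]
  rfl
end
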